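/- arXiv:2503.03678 — 5 statements merged into one kernel-verified Lean document; each statement's English description precedes it below -/
import Mathlib

section
/- Let T be the 2×2 real matrix with rows (-1, 2) and (0, -1), acting on ℝ². Then T is Cesàro bounded (sup_n ‖M_n(T)‖ < ∞) but not mean ergodic: there exists x ∈ ℝ² such that ‖T^n x‖/n does not converge to 0. -/
open Finset Filter

private lemma euclid_coord_le_norm (y : EuclideanSpace ℝ (Fin 2)) (i : Fin 2) :
    |y i| ≤ ‖y‖ := by
  rw [EuclideanSpace.norm_eq, show ∑ j, ‖y j‖^2 = |y 0|^2 + |y 1|^2 by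
    simp [Fin.sum_univ_two, sq_abs]]
  rw [show |y i| = Real.sqrt (|y i|^2) by rw [Real.sqrt_sq (abs_nonneg _)]]
  apply Real.sqrt_le_sqrt
  fin_cases i
  · exact le_add_of_nonneg_right (by positivity)
  · exact le_add_of_nonneg_left (by positivity)

private lemma euclid_norm_le (y : EuclideanSpace ℝ (Fin 2)) : ‖y‖ ≤ |y 0| + |y 1| := by
  rw [EuclideanSpace.norm_eq, show ∑ j, ‖y j‖^2 = |y 0|^2 + |y 1|^2 by
    simp [Fin.sum_univ_two, sq_abs]]
  have h0 := abs_nonneg (y 0); have h1 := abs_nonneg (y 1)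
  nlinarith [Real.sq_sqrt (by positivity : (0:ℝ) ≤ |y 0|^2 + |y 1|^2),
    Real.sqrt_nonneg (|y 0|^2 + |y 1|^2)]

private lemma sum_neg_one_pow' (n : ℕ) :
    ∑ k ∈ range (n+1), ((-1:ℝ))^k = (1 + (-1)^n)/2 := by
  induction n with
  | zero => simp
  | succ n ih => rw [Finset.sum_range_succ, ih, pow_succ]; ring

private lemma sum_k_neg_one_pow (n : ℕ) :
    ∑ k ∈ range (n+1), (k:ℝ)*(-1)^k = ((-1)^n*(2*n+1) - 1)/4 := by
  induction n with
  | zero => simp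
  | succ n ih => rw [Finset.sum_range_succ, ih, pow_succ]; push_cast; ring

/-- The operator on `ℝ²` given by the matrix `[[-1, 2], [0, -1]]` is Cesàro bounded
(`sup_n ‖M_n(T)‖ < ∞`) but not mean ergodic: there is `x ∈ ℝ²` such that
`‖T^n x‖ / n` does not converge to `0`. -/
theorem assani_example (T : EuclideanSpace ℝ (Fin 2) →L[ℝ] EuclideanSpace ℝ (Fin 2))
    (hT : ∀ x : EuclideanSpace ℝ (Fin 2),
      T x 0 = -x 0 + 2 * x 1 ∧ T x 1 = -x 1) :
    (∃ C : ℝ, ∀ n : ℕ, ‖((n : ℝ) + 1)⁻¹ • ∑ k ∈ range (n + 1), T ^ k‖ ≤ C) ∧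
      ∃ x : EuclideanSpace ℝ (Fin 2),
        ¬ Tendsto (fun n : ℕ => ‖(T ^ n) x‖ / (n : ℝ)) atTop (nhds 0) := by
  have key : ∀ (k : ℕ) (x : EuclideanSpace ℝ (Fin 2)),
      (T^k) x 0 = (-1)^k * (x 0 - 2*k*x 1) ∧ (T^k) x 1 = (-1)^k * x 1 := by
    intro k x
    induction k with
    | zero => simp
    | succ k ih =>
      rw [pow_succ', ContinuousLinearMap.mul_apply]
      obtain ⟨h0, h1⟩ := hT ((T^k) x)
      refine ⟨?_, ?_⟩
      · rw [h0, ih.1, ih.2, pow_succ]; push_cast; ring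
      · rw [h1, ih.2, pow_succ]; ring
  constructor
  · refine ⟨2, fun n => ?_⟩
    apply ContinuousLinearMap.opNorm_le_bound _ (by norm_num)
    intro x
    set y : EuclideanSpace ℝ (Fin 2) :=
      (((n : ℝ) + 1)⁻¹ • ∑ k ∈ range (n + 1), T ^ k) x with hy
    have hsum : ∀ j : Fin 2, (∑ k ∈ range (n+1), T^k) x j
        = ∑ k ∈ range (n+1), (T^k) x j := by
      intro j
      rw [ContinuousLinearMap.sum_apply]
      rw [WithLp.ofLp_sum]
      exact Finset.sum_apply j (range (n+1)) _
    have hnpos : (0:ℝ) < (n:ℝ) + 1 := by positivity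
    have hn1 : (0:ℝ) ≤ (n:ℝ) := Nat.cast_nonneg n
    have hx0 := euclid_coord_le_norm x 0
    have hx1 := euclid_coord_le_norm x 1
    have hxn := norm_nonneg x
    have hs : ((-1:ℝ))^n = 1 ∨ ((-1:ℝ))^n = -1 := by
      rcases Nat.even_or_odd n with he | ho
      · left; exact he.neg_one_pow
      · right; exact ho.neg_one_pow
    have e0 : ∑ k ∈ range (n+1), (T^k) x 0
        = (∑ k ∈ range (n+1), ((-1:ℝ))^k) * x 0
          - (∑ k ∈ range (n+1), (k:ℝ)*(-1)^k) * (2 * x 1) := by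
      rw [Finset.sum_mul, Finset.sum_mul, ← Finset.sum_sub_distrib]
      exact Finset.sum_congr rfl fun k _ => by rw [(key k x).1]; ring
    have e1 : ∑ k ∈ range (n+1), (T^k) x 1
        = (∑ k ∈ range (n+1), ((-1:ℝ))^k) * x 1 := by
      rw [Finset.sum_mul]
      exact Finset.sum_congr rfl fun k _ => (key k x).2
    have hy0v : y 0 = ((n:ℝ)+1)⁻¹ *
        (((1 + (-1:ℝ)^n)/2) * x 0 - ((((-1:ℝ))^n*(2*(n:ℝ)+1) - 1)/4) * (2 * x 1)) := by
      have : y 0 = ((n:ℝ)+1)⁻¹ * ((∑ k ∈ range (n+1), T^k) x 0) := by rw [hy]; simp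
      rw [this, hsum 0, e0, sum_neg_one_pow', sum_k_neg_one_pow]
    have hy1v : y 1 = ((n:ℝ)+1)⁻¹ * (((1 + (-1:ℝ)^n)/2) * x 1) := by
      have : y 1 = ((n:ℝ)+1)⁻¹ * ((∑ k ∈ range (n+1), T^k) x 1) := by rw [hy]; simp
      rw [this, hsum 1, e1, sum_neg_one_pow']
    have hy0 : |y 0| ≤ ‖x‖ := by
      rcases hs with h | h
      · rw [hy0v, h]
        have e : ((n:ℝ)+1)⁻¹ * (((1 + (1:ℝ))/2) * x 0 - (((1:ℝ)*(2*(n:ℝ)+1) - 1)/4) * (2 * x 1))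
            = ((n:ℝ)+1)⁻¹ * (x 0 - (n:ℝ) * x 1) := by ring
        rw [e, abs_mul, abs_inv, abs_of_pos hnpos]
        calc ((n:ℝ)+1)⁻¹ * |x 0 - (n:ℝ) * x 1|
            ≤ ((n:ℝ)+1)⁻¹ * (|x 0| + (n:ℝ) * |x 1|) := by
              gcongr
              calc |x 0 - (n:ℝ) * x 1| ≤ |x 0| + |(n:ℝ) * x 1| := abs_sub _ _
                _ = |x 0| + (n:ℝ) * |x 1| := by rw [abs_mul, abs_of_nonneg hn1]
          _ ≤ ((n:ℝ)+1)⁻¹ * (((n:ℝ)+1) * ‖x‖) := by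
              gcongr
              nlinarith
          _ = ‖x‖ := by field_simp
      · rw [hy0v, h]
        have e : ((n:ℝ)+1)⁻¹ * (((1 + (-1:ℝ))/2) * x 0 - (((-1:ℝ)*(2*(n:ℝ)+1) - 1)/4) * (2 * x 1))
            = ((n:ℝ)+1)⁻¹ * (((n:ℝ)+1) * x 1) := by ring
        rw [e, ← mul_assoc, inv_mul_cancel₀ (ne_of_gt hnpos), one_mul]
        exact hx1
    have hy1 : |y 1| ≤ ‖x‖ := by
      rcases hs with h | h
      · rw [hy1v, h]
        have e : ((n:ℝ)+1)⁻¹ * (((1 + (1:ℝ))/2) * x 1) = ((n:ℝ)+1)⁻¹ * x 1 := by ring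
        rw [e, abs_mul, abs_inv, abs_of_pos hnpos]
        calc ((n:ℝ)+1)⁻¹ * |x 1| ≤ 1 * ‖x‖ := by
              apply mul_le_mul _ hx1 (abs_nonneg _) zero_le_one
              rw [inv_le_one_iff₀]; right; linarith
          _ = ‖x‖ := one_mul _
      · rw [hy1v, h]
        simp
    calc ‖y‖ ≤ |y 0| + |y 1| := euclid_norm_le y
      _ ≤ ‖x‖ + ‖x‖ := add_le_add hy0 hy1
      _ = 2 * ‖x‖ := by ring
  · refine ⟨(WithLp.equiv 2 _).symm ![0, 1], fun h => ?_⟩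
    set x : EuclideanSpace ℝ (Fin 2) := (WithLp.equiv 2 _).symm ![0, 1] with hxdef
    have hx0 : x 0 = 0 := rfl
    have hx1 : x 1 = 1 := rfl
    have hlow : ∀ n : ℕ, 1 ≤ n → 2 ≤ ‖(T^n) x‖ / (n:ℝ) := by
      intro n hn
      have hnpos : (0:ℝ) < n := by exact_mod_cast hn
      have h0 : (T^n) x 0 = (-1)^n * (-(2*(n:ℝ))) := by
        rw [(key n x).1, hx0, hx1]; ring
      have : (2*(n:ℝ)) ≤ ‖(T^n) x‖ := by
        calc (2*(n:ℝ)) = |(T^n) x 0| := by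
              rw [h0, abs_mul, abs_pow, abs_neg, abs_one, one_pow, one_mul,
                abs_neg, abs_of_pos (by positivity)]
          _ ≤ ‖(T^n) x‖ := euclid_coord_le_norm _ 0
      rw [le_div_iff₀ hnpos]; linarith
    have hev : ∀ᶠ n : ℕ in atTop, ‖(T^n) x‖ / (n:ℝ) < 2 :=
      h.eventually (eventually_lt_nhds (by norm_num : (0:ℝ) < 2))
    rw [eventually_atTop] at hev
    obtain ⟨N, hN⟩ := hev
    have h1 := hN (max N 1) (le_max_left _ _)
    have h2 := hlow (max N 1) (le_max_right _ _)
    linarith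
end

section
/- Let T be the unilateral weighted backward shift on ℓ¹(ℕ) with T e_1 = 0 and T e_k = (k/(k-1)) e_{k-1} for k ≥ 2 (weights w_k = k/(k-1), i.e., α = 1 = 1/p for p = 1). Then T is not Cesàro bounded. -/
open Finset

private lemma pow_apply_single
    (T : lp (fun _ : ℕ => ℝ) 1 →L[ℝ] lp (fun _ : ℕ => ℝ) 1)
    (hTk : ∀ i : ℕ, 1 ≤ i →
      T (lp.single 1 i (1 : ℝ)) = (((i : ℝ) + 1) / (i : ℝ)) • lp.single 1 (i - 1) (1 : ℝ))
    (n : ℕ) : ∀ j : ℕ, j ≤ n →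
      (T ^ j) (lp.single 1 n (1 : ℝ))
        = (((n : ℝ) + 1) / ((n : ℝ) - j + 1)) • lp.single 1 (n - j) (1 : ℝ) := by
  intro j
  induction j with
  | zero =>
    intro _
    rw [pow_zero, ContinuousLinearMap.one_apply, Nat.sub_zero]
    push_cast
    rw [sub_zero, div_self (by positivity), one_smul]
  | succ j ih =>
    intro hj
    have hj' : j ≤ n := Nat.le_of_succ_le hj
    have hjn : j < n := hj
    rw [pow_succ', ContinuousLinearMap.mul_apply, ih hj']
    rw [map_smul]
    have h1 : 1 ≤ n - j := Nat.le_sub_of_add_le (by omega)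
    rw [hTk (n - j) h1]
    have hc : ((n - j : ℕ) : ℝ) = (n : ℝ) - j := by
      push_cast [Nat.cast_sub hj']; ring
    rw [smul_smul]
    have hnj : n - j - 1 = n - (j + 1) := by omega
    rw [hnj, hc]
    congr 1
    have h2 : (n : ℝ) - j ≠ 0 := by
      have : (j : ℝ) < n := by exact_mod_cast hjn
      linarith
    have h3 : (n : ℝ) - j + 1 ≠ 0 := by
      have : (j : ℝ) < n := by exact_mod_cast hjn
      linarith
    have hcast : (n:ℝ) - ((j+1 : ℕ) : ℝ) + 1 = (n:ℝ) - j := by push_cast; ring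
    rw [hcast, div_mul_div_comm, mul_comm ((n:ℝ)+1), mul_div_mul_left _ _ h3]

/-- The unilateral weighted backward shift on `ℓ¹(ℕ)` with weights `w_k = k/(k-1)`
(sending the first basis vector to `0` and `e_k` to `(k/(k-1)) e_{k-1}` for `k ≥ 2`;
here the basis is indexed from `0`, so `e_i ↦ ((i+1)/i) e_{i-1}` for `i ≥ 1`)
is not Cesàro bounded. -/
theorem backwardShift_not_cesaroBounded
    (T : lp (fun _ : ℕ => ℝ) 1 →L[ℝ] lp (fun _ : ℕ => ℝ) 1)
    (hT0 : T (lp.single 1 0 (1 : ℝ)) = 0)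
    (hTk : ∀ i : ℕ, 1 ≤ i →
      T (lp.single 1 i (1 : ℝ)) = (((i : ℝ) + 1) / (i : ℝ)) • lp.single 1 (i - 1) (1 : ℝ)) :
    ¬ ∃ C : ℝ, ∀ n : ℕ, ‖((n : ℝ) + 1)⁻¹ • ∑ j ∈ range (n + 1), T ^ j‖ ≤ C := by
  rintro ⟨C, hC⟩
  -- pick n with harmonic sum > C
  obtain ⟨n, hn⟩ := (Filter.tendsto_atTop.1 Real.tendsto_sum_range_one_div_nat_succ_atTop (C + 1))
    |>.exists
  have key : ∀ n : ℕ, (∑ m ∈ range (n + 1), (1 / ((m : ℝ) + 1))) ≤ C := by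
    intro n
    set e : ℕ → lp (fun _ : ℕ => ℝ) 1 := fun m => lp.single 1 m (1 : ℝ) with he
    have hnorm_e : ‖e n‖ = 1 := by
      have := lp.norm_single (E := fun _ : ℕ => ℝ) (p := (1 : ENNReal)) (by norm_num) n (1 : ℝ)
      exact this.trans norm_one
    set M := ((n : ℝ) + 1)⁻¹ • ∑ j ∈ range (n + 1), T ^ j with hM
    have hx : M (e n) = ∑ m ∈ range (n + 1), lp.single 1 m (((m : ℝ) + 1)⁻¹) := by
      rw [hM, ContinuousLinearMap.smul_apply, ContinuousLinearMap.sum_apply]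
      have hterm : ∀ j ∈ range (n + 1),
          (T ^ j) (e n) = (((n : ℝ) + 1) / ((n : ℝ) - j + 1)) • e (n - j) := fun j hj =>
        pow_apply_single T hTk n j (Nat.lt_succ_iff.1 (mem_range.1 hj))
      rw [Finset.sum_congr rfl hterm, Finset.smul_sum]
      rw [show (∑ m ∈ range (n + 1), lp.single 1 m (((m : ℝ) + 1)⁻¹))
          = ∑ j ∈ range (n + 1), lp.single 1 (n - j) ((((n - j : ℕ) : ℝ) + 1)⁻¹) from
        (Finset.sum_range_reflect (fun m => lp.single 1 m (((m : ℝ) + 1)⁻¹)) (n + 1)).symm ▸ by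
          refine Finset.sum_congr rfl fun j hj => ?_
          congr 1 <;> omega]
      refine Finset.sum_congr rfl fun j hj => ?_
      have hjn : j ≤ n := Nat.lt_succ_iff.1 (mem_range.1 hj)
      have hc : ((n - j : ℕ) : ℝ) = (n : ℝ) - j := by
        push_cast [Nat.cast_sub hjn]; ring
      rw [smul_smul, he]
      rw [show ((((n - j : ℕ) : ℝ) + 1)⁻¹ : ℝ) = (((n - j : ℕ) : ℝ) + 1)⁻¹ • (1 : ℝ) by
        simp]
      rw [lp.single_smul]
      congr 1
      have hj' : (j : ℝ) ≤ n := by exact_mod_cast hjn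
      rw [hc]
      have h3 : (n : ℝ) - j + 1 ≠ 0 := by linarith
      field_simp
    have hsum : ∑ m ∈ range (n + 1), (1 / ((m : ℝ) + 1)) ≤ ‖M (e n)‖ := by
      rw [hx]
      have := lp.norm_sum_single (p := (1 : ENNReal)) (by norm_num)
        (fun m : ℕ => (((m : ℝ) + 1)⁻¹)) (range (n + 1))
      simp only [ENNReal.toReal_one, Real.rpow_one] at this
      rw [this]
      refine le_of_eq (Finset.sum_congr rfl fun m _ => ?_)
      rw [Real.norm_eq_abs, abs_of_pos (by positivity), one_div]
    calc ∑ m ∈ range (n + 1), (1 / ((m : ℝ) + 1)) ≤ ‖M (e n)‖ := hsum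
      _ ≤ ‖M‖ * ‖e n‖ := M.le_opNorm _
      _ = ‖M‖ := by rw [hnorm_e, mul_one]
      _ ≤ C := hC n
  have := key n
  have h2 : C + 1 ≤ ∑ i ∈ range n, (1 / ((i : ℝ) + 1)) := hn
  have h3 : (∑ i ∈ range n, (1 / ((i : ℝ) + 1))) ≤ ∑ i ∈ range (n + 1), (1 / ((i : ℝ) + 1)) := by
    apply Finset.sum_le_sum_of_subset_of_nonneg (Finset.range_subset_range.2 (Nat.le_succ n))
    intro i _ _; positivity
  linarith
end

section
/- For -1 < α < 0, the operator M_z on D_α is not Cesàro bounded: ‖M_n(M_z)1‖² = (1/(n+1)²)∑_{k=0}^n (k+1)^{1-α}, which grows like n^{-α} and thus tends to infinity. -/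
open Filter Finset

/-- The shift of coefficient sequences corresponding to multiplication by `z`. -/
def mulz (a : ℕ → ℂ) : ℕ → ℂ := fun n => if n = 0 then 0 else a (n - 1)

/-- The squared norm in the weighted Dirichlet space `D_α` of the function with
Taylor coefficients `a`: `‖f‖² = ∑ (n+1)^{1-α} |a_n|²`. -/
noncomputable def dirNormSq (α : ℝ) (a : ℕ → ℂ) : ℝ :=
  ∑' n : ℕ, ((n : ℝ) + 1) ^ ((1 : ℝ) - α) * ‖a n‖ ^ 2

/-- Coefficients of the constant function `1`. -/
def deltaZero : ℕ → ℂ := fun n => if n = 0 then 1 else 0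

/-- Coefficients of the Cesàro mean `M_n(M_z) 1 = (1/(n+1)) ∑_{k=0}^n z^k`. -/
noncomputable def cesaroCoeff (n : ℕ) : ℕ → ℂ :=
  fun m => ((n : ℂ) + 1)⁻¹ * ∑ k ∈ range (n + 1), mulz^[k] deltaZero m

lemma iter_mulz (k m : ℕ) : mulz^[k] deltaZero m = if m = k then 1 else 0 := by
  induction k generalizing m with
  | zero => simp [deltaZero]
  | succ k ih =>
    rw [Function.iterate_succ_apply', mulz]
    rcases Nat.eq_zero_or_pos m with h | h
    · simp [h]
    · simp only [Nat.pos_iff_ne_zero.mp h, if_neg (Nat.pos_iff_ne_zero.mp h), ih]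
      have : m - 1 = k ↔ m = k + 1 := by omega
      simp [this]

lemma cesaro_eq (n m : ℕ) : cesaroCoeff n m = if m ≤ n then ((n : ℂ) + 1)⁻¹ else 0 := by
  simp only [cesaroCoeff, iter_mulz]
  rw [Finset.sum_ite_eq (range (n+1)) m (fun _ => (1:ℂ))]
  by_cases h : m ≤ n <;> simp [h, Nat.lt_succ_iff]

lemma formula (α : ℝ) (n : ℕ) :
    (∑' m : ℕ, ((m : ℝ) + 1) ^ ((1 : ℝ) - α) * ‖cesaroCoeff n m‖ ^ 2) =
      (((n : ℝ) + 1) ^ 2)⁻¹ * ∑ k ∈ range (n + 1), ((k : ℝ) + 1) ^ ((1 : ℝ) - α) := by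
  rw [tsum_eq_sum (s := range (n + 1)) (by
    intro m hm
    simp only [mem_range, Nat.lt_succ_iff, not_le] at hm
    simp [cesaro_eq, Nat.not_le.mpr hm, if_neg (by omega : ¬ m ≤ n)])]
  rw [Finset.mul_sum]
  refine Finset.sum_congr rfl fun m hm => ?_
  simp only [mem_range, Nat.lt_succ_iff] at hm
  rw [cesaro_eq, if_pos hm]
  have hn : ‖((n : ℂ) + 1)⁻¹‖ = ((n : ℝ) + 1)⁻¹ := by
    rw [norm_inv]
    norm_cast
  rw [hn]
  have : ((n:ℝ)+1) ≠ 0 := by positivity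
  field_simp

lemma sq_sum_lb (N : ℕ) : (N : ℝ) ^ 3 / 3 ≤ ∑ k ∈ range N, ((k : ℝ) + 1) ^ 2 := by
  induction N with
  | zero => simp
  | succ N ih =>
    rw [Finset.sum_range_succ]
    push_cast
    nlinarith [ih, Nat.cast_nonneg (α := ℝ) N]

lemma lower_bound (α : ℝ) (hα₁ : -1 < α) (n : ℕ) :
    ((n : ℝ) + 1) ^ (-α) / 3 ≤
      (((n : ℝ) + 1) ^ 2)⁻¹ * ∑ k ∈ range (n + 1), ((k : ℝ) + 1) ^ ((1 : ℝ) - α) := by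
  have hn : (0 : ℝ) < (n : ℝ) + 1 := by positivity
  have key : ∀ k ∈ range (n + 1),
      ((k : ℝ) + 1) ^ 2 * ((n : ℝ) + 1) ^ (-1 - α) ≤ ((k : ℝ) + 1) ^ ((1 : ℝ) - α) := by
    intro k hk
    simp only [mem_range, Nat.lt_succ_iff] at hk
    have hk1 : (0 : ℝ) < (k : ℝ) + 1 := by positivity
    have h1 : ((k : ℝ) + 1) ^ ((1 : ℝ) - α) = ((k : ℝ) + 1) ^ 2 * ((k : ℝ) + 1) ^ (-1 - α) := by
      rw [← Real.rpow_natCast ((k:ℝ)+1) 2, ← Real.rpow_add hk1]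
      congr 1
      push_cast
      ring
    rw [h1]
    exact mul_le_mul_of_nonneg_left (Real.rpow_le_rpow_of_nonpos hk1
      (by have : (k:ℝ) ≤ n := Nat.cast_le.mpr hk; linarith) (by linarith)) (sq_nonneg _)
  have h2 : ((n : ℝ) + 1) ^ 3 / 3 ≤ ∑ k ∈ range (n + 1), ((k : ℝ) + 1) ^ 2 := by
    have := sq_sum_lb (n + 1); push_cast at this; exact this
  have hsum : (((n : ℝ) + 1) ^ 3 / 3) * ((n : ℝ) + 1) ^ (-1 - α) ≤
      ∑ k ∈ range (n + 1), ((k : ℝ) + 1) ^ ((1 : ℝ) - α) :=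
    le_trans (mul_le_mul_of_nonneg_right h2 (Real.rpow_nonneg hn.le _))
      (le_trans (le_of_eq (Finset.sum_mul _ _ _)) (Finset.sum_le_sum key))
  have heq : (((n : ℝ) + 1) ^ 2)⁻¹ * ((((n : ℝ) + 1) ^ 3 / 3) * ((n : ℝ) + 1) ^ (-1 - α)) =
      ((n : ℝ) + 1) ^ (-α) / 3 := by
    rw [← Real.rpow_natCast ((n:ℝ)+1) 2, ← Real.rpow_natCast ((n:ℝ)+1) 3,
      ← Real.rpow_neg hn.le, div_mul_eq_mul_div, ← Real.rpow_add hn, mul_div_assoc',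
      ← Real.rpow_add hn]
    congr 2
    push_cast
    ring
  rw [← heq]
  exact mul_le_mul_of_nonneg_left hsum (by positivity)

/-- For `-1 < α < 0`, `M_z` on `D_α` is not Cesàro bounded:
`‖M_n(M_z) 1‖² = (1/(n+1)²) ∑_{k=0}^n (k+1)^{1-α}`, which tends to infinity. -/
theorem mul_z_not_cesaroBounded (α : ℝ) (hα₁ : -1 < α) (hα₂ : α < 0) :
    (∀ n : ℕ, dirNormSq α (cesaroCoeff n) =
        (((n : ℝ) + 1) ^ 2)⁻¹ * ∑ k ∈ range (n + 1), ((k : ℝ) + 1) ^ ((1 : ℝ) - α)) ∧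
      Tendsto (fun n : ℕ => dirNormSq α (cesaroCoeff n)) atTop atTop := by
  have key : ∀ n : ℕ, dirNormSq α (cesaroCoeff n) =
      (((n : ℝ) + 1) ^ 2)⁻¹ * ∑ k ∈ range (n + 1), ((k : ℝ) + 1) ^ ((1 : ℝ) - α) :=
    fun n => formula α n
  refine ⟨key, ?_⟩
  have h1 : Tendsto (fun n : ℕ => ((n : ℝ) + 1) ^ (-α) / 3) atTop atTop := by
    apply Tendsto.atTop_div_const (by norm_num : (0:ℝ) < 3)
    exact (tendsto_rpow_atTop (by linarith : 0 < -α)).comp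
      (tendsto_atTop_add_const_right _ 1 tendsto_natCast_atTop_atTop)
  refine tendsto_atTop_mono (fun n => ?_) h1
  rw [key n]
  exact lower_bound α hα₁ n
end

section
/- In a reflexive Banach space, if T is Cesàro bounded and ‖T^n x‖/n → 0 for every x, then T is mean ergodic (the Cesàro means M_n(T)x converge for every x). -/
set_option maxHeartbeats 800000
set_option synthInstance.maxHeartbeats 400000

open Finset Filter Metric Topology

namespace MeanErgodicAux

lemma one_sub_mul_geom {R : Type*} [Ring R] (T : R) (n : ℕ) :
    (1 - T) * ∑ i ∈ range n, T ^ i = 1 - T ^ n := by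
  have h := mul_geom_sum T n
  have e : (1 : R) - T = -(T - 1) := (neg_sub T 1).symm
  rw [e, neg_mul, h, neg_sub]

lemma geom_mul_one_sub {R : Type*} [Ring R] (T : R) (n : ℕ) :
    (∑ i ∈ range n, T ^ i) * (1 - T) = 1 - T ^ n := by
  have h := geom_sum_mul T n
  have e : (1 : R) - T = -(T - 1) := (neg_sub T 1).symm
  rw [e, mul_neg, h, neg_sub]

variable {X : Type*} [NormedAddCommGroup X] [NormedSpace ℝ X]

noncomputable def cesM (T : X →L[ℝ] X) (n : ℕ) : X →L[ℝ] X :=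
  ((n : ℝ) + 1)⁻¹ • ∑ k ∈ range (n + 1), T ^ k

lemma cesM_one_sub_apply (T : X →L[ℝ] X) (n : ℕ) (v : X) :
    cesM T n (v - T v) = ((n : ℝ) + 1)⁻¹ • (v - (T ^ (n + 1)) v) := by
  have h : (cesM T n) * (1 - T) = ((n : ℝ) + 1)⁻¹ • ((1 : X →L[ℝ] X) - T ^ (n + 1)) := by
    rw [cesM, smul_mul_assoc, geom_mul_one_sub]
  have h2 := congrArg (fun A : X →L[ℝ] X => A v) h
  simpa using h2

lemma sub_T_cesM_apply (T : X →L[ℝ] X) (n : ℕ) (x : X) :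
    cesM T n x - T (cesM T n x) = ((n : ℝ) + 1)⁻¹ • (x - (T ^ (n + 1)) x) := by
  have c : Commute (1 - T) (∑ i ∈ range (n + 1), T ^ i) :=
    Commute.sub_left (Commute.one_left _)
      (Commute.sum_right _ _ _ fun i _ => (Commute.refl T).pow_right i)
  have h : (1 - T) * cesM T n = ((n : ℝ) + 1)⁻¹ • ((1 : X →L[ℝ] X) - T ^ (n + 1)) := by
    rw [cesM, mul_smul_comm, c.eq, geom_mul_one_sub]
  have h2 := congrArg (fun A : X →L[ℝ] X => A x) h
  simpa using h2

lemma cesM_apply_fixed (T : X →L[ℝ] X) {y : X} (hy : T y = y) (n : ℕ) :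
    cesM T n y = y := by
  have hk : ∀ k : ℕ, (T ^ k) y = y := by
    intro k
    induction k with
    | zero => simp
    | succ k ih => rw [pow_succ, ContinuousLinearMap.mul_apply, hy, ih]
  have : cesM T n y = ((n : ℝ) + 1)⁻¹ • ∑ k ∈ range (n + 1), (T ^ k) y := by
    simp [cesM, ContinuousLinearMap.sum_apply]
  rw [this]
  simp only [hk, sum_const, card_range]
  rw [← Nat.cast_smul_eq_nsmul ℝ, smul_smul]
  push_cast
  rw [inv_mul_cancel₀ (by positivity : ((n : ℝ) + 1) ≠ 0), one_smul]

lemma exists_sub_cesM (T : X →L[ℝ] X) (n : ℕ) (x : X) :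
    ∃ v : X, x - cesM T n x = v - T v := by
  set S : X →L[ℝ] X := ((n : ℝ) + 1)⁻¹ • ∑ k ∈ range (n + 1), ∑ j ∈ range k, T ^ j with hS
  refine ⟨S x, ?_⟩
  have key : (1 : X →L[ℝ] X) - cesM T n = (1 - T) * S := by
    have h1 : (1 - T) * S
        = ((n : ℝ) + 1)⁻¹ • ∑ k ∈ range (n + 1), ((1 : X →L[ℝ] X) - T ^ k) := by
      rw [hS, mul_smul_comm, mul_sum]
      congr 1
      exact Finset.sum_congr rfl fun k _ => one_sub_mul_geom T k
    rw [h1, Finset.sum_sub_distrib, smul_sub, sum_const, card_range]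
    rw [← Nat.cast_smul_eq_nsmul ℝ, smul_smul]
    push_cast
    rw [inv_mul_cancel₀ (by positivity : ((n : ℝ) + 1) ≠ 0), one_smul, cesM]
  have h2 := congrArg (fun A : X →L[ℝ] X => A x) key
  simpa using h2

lemma tendsto_aux_zero (T : X →L[ℝ] X)
    (hpow : ∀ x : X, Tendsto (fun n : ℕ => ‖(T ^ n) x‖ / (n : ℝ)) atTop (nhds 0)) (v : X) :
    Tendsto (fun n : ℕ => ((n : ℝ) + 1)⁻¹ • (v - (T ^ (n + 1)) v)) atTop (𝓝 0) := by
  have ha : Tendsto (fun n : ℕ => ((n : ℝ) + 1)⁻¹ * ‖v‖) atTop (𝓝 0) := by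
    simpa [one_div] using tendsto_one_div_add_atTop_nhds_zero_nat.mul_const ‖v‖
  have hb : Tendsto (fun n : ℕ => ‖(T ^ (n + 1)) v‖ / ((n : ℝ) + 1)) atTop (𝓝 0) := by
    have := (hpow v).comp (tendsto_add_atTop_nat 1)
    have e : (fun n : ℕ => ‖(T ^ n) v‖ / (n : ℝ)) ∘ (fun a => a + 1)
        = fun n : ℕ => ‖(T ^ (n + 1)) v‖ / ((n : ℝ) + 1) := by
      funext n
      simp [Function.comp]
    rwa [e] at this
  have h1 : Tendsto (fun n : ℕ => ((n : ℝ) + 1)⁻¹ * ‖v‖ + ‖(T ^ (n + 1)) v‖ / ((n : ℝ) + 1))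
      atTop (𝓝 0) := by simpa using ha.add hb
  apply squeeze_zero_norm _ h1
  intro n
  rw [norm_smul]
  have h2 : ‖v - (T ^ (n + 1)) v‖ ≤ ‖v‖ + ‖(T ^ (n + 1)) v‖ := norm_sub_le _ _
  have h3 : (0 : ℝ) ≤ ((n : ℝ) + 1)⁻¹ := by positivity
  have h4 : ‖((n : ℝ) + 1)⁻¹‖ = ((n : ℝ) + 1)⁻¹ := by
    rw [Real.norm_eq_abs, abs_of_nonneg h3]
  rw [h4]
  calc ((n : ℝ) + 1)⁻¹ * ‖v - (T ^ (n + 1)) v‖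
      ≤ ((n : ℝ) + 1)⁻¹ * (‖v‖ + ‖(T ^ (n + 1)) v‖) := by
        exact mul_le_mul_of_nonneg_left h2 h3
    _ = ((n : ℝ) + 1)⁻¹ * ‖v‖ + ‖(T ^ (n + 1)) v‖ / ((n : ℝ) + 1) := by ring

end MeanErgodicAux

open MeanErgodicAux NormedSpace

/-- In a reflexive Banach space (the canonical inclusion into the double dual is
surjective), a Cesàro bounded operator `T` with `‖T^n x‖/n → 0` for every `x` is
mean ergodic: the Cesàro means `M_n(T) x` converge for every `x`. -/
theorem meanErgodic_of_cesaroBounded_reflexive {X : Type*} [NormedAddCommGroup X]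
    [NormedSpace ℝ X] [CompleteSpace X]
    (hrefl : Function.Surjective ⇑(NormedSpace.inclusionInDoubleDual ℝ X))
    (T : X →L[ℝ] X)
    (hCB : ∃ C : ℝ, ∀ n : ℕ, ‖((n : ℝ) + 1)⁻¹ • ∑ k ∈ range (n + 1), T ^ k‖ ≤ C)
    (hpow : ∀ x : X, Tendsto (fun n : ℕ => ‖(T ^ n) x‖ / (n : ℝ)) atTop (nhds 0)) :
    ∀ x : X, ∃ y : X,
      Tendsto (fun n : ℕ => (((n : ℝ) + 1)⁻¹ • ∑ k ∈ range (n + 1), T ^ k) x)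
        atTop (nhds y) := by
  obtain ⟨C₀, hC₀⟩ := hCB
  set C : ℝ := max C₀ 0 with hCdef
  have hC : ∀ n, ‖cesM T n‖ ≤ C := fun n => le_trans (hC₀ n) (le_max_left _ _)
  have hC0 : (0 : ℝ) ≤ C := le_max_right _ _
  intro x
  set J := NormedSpace.inclusionInDoubleDual ℝ X with hJ
  set Φn : ℕ → WeakDual ℝ (StrongDual ℝ X) :=
    fun n => WeakDual.toStrongDual.symm (J (cesM T n x)) with hΦn
  have hΦval : ∀ n (f : StrongDual ℝ X), Φn n f = f (cesM T n x) := by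
    intro n f
    have : WeakDual.toStrongDual (Φn n) = J (cesM T n x) :=
      LinearEquiv.apply_symm_apply _ _
    rw [← WeakDual.toStrongDual_apply, this, NormedSpace.dual_def]
  -- cluster point in the double dual
  set R : ℝ := C * ‖x‖ with hR
  have hmem : ∀ n, Φn n ∈
      (WeakDual.toStrongDual ⁻¹' closedBall (0 : StrongDual ℝ (StrongDual ℝ X)) R) := by
    intro n
    simp only [Set.mem_preimage, mem_closedBall_zero_iff]
    have h1 : WeakDual.toStrongDual (Φn n) = J (cesM T n x) :=
      LinearEquiv.apply_symm_apply _ _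
    rw [h1]
    refine (mem_closedBall_zero_iff (E := StrongDual ℝ (StrongDual ℝ X))).2 ?_
    calc ‖J (cesM T n x)‖ ≤ ‖cesM T n x‖ := NormedSpace.double_dual_bound ℝ X _
      _ ≤ C * ‖x‖ := (cesM T n).le_of_opNorm_le (hC n) x
  have hle : map Φn atTop ≤
      𝓟 (WeakDual.toStrongDual ⁻¹' closedBall (0 : StrongDual ℝ (StrongDual ℝ X)) R) :=
    le_principal_iff.2 (eventually_map.2 (Eventually.of_forall hmem))
  obtain ⟨Φ, -, hΦ⟩ :=
    (WeakDual.isCompact_closedBall (𝕜 := ℝ) (0 : StrongDual ℝ (StrongDual ℝ X)) R).exists_clusterPt hle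
  obtain ⟨y, hy⟩ := hrefl (WeakDual.toStrongDual Φ)
  -- the subfilter along which Φn → Φ
  set L : Filter ℕ := atTop ⊓ comap Φn (𝓝 Φ) with hLdef
  have hmapL : map Φn L = map Φn atTop ⊓ 𝓝 Φ := Filter.push_pull _ _ _
  have hLne : L.NeBot := by
    rw [← Filter.map_neBot_iff Φn, hmapL, inf_comm]
    exact hΦ
  haveI := hLne
  have hLle : L ≤ atTop := inf_le_left
  have hΦtend : Tendsto Φn L (𝓝 Φ) := by
    rw [Filter.Tendsto, hmapL]; exact inf_le_right
  have hEval : ∀ f : StrongDual ℝ X, Tendsto (fun n => f (cesM T n x)) L (𝓝 (f y)) := by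
    intro f
    have hc : Continuous fun Ψ : WeakDual ℝ (StrongDual ℝ X) => Ψ f := WeakDual.eval_continuous f
    have h1 := (hc.tendsto Φ).comp hΦtend
    have hΦf : Φ f = f y := by
      have h2 : WeakDual.toStrongDual Φ f = f y := by rw [← hy, hJ, NormedSpace.dual_def]
      rwa [WeakDual.toStrongDual_apply] at h2
    have e : (fun Ψ : WeakDual ℝ (StrongDual ℝ X) => Ψ f) ∘ Φn = fun n => f (cesM T n x) := by
      funext n; simp [Function.comp, hΦval]
    rw [e, hΦf] at h1
    exact h1
  -- y is a fixed point of T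
  have hTy : T y = y := by
    rw [NormedSpace.eq_iff_forall_dual_eq ℝ]
    intro g
    have h1 : Tendsto (fun n => g (T (cesM T n x))) L (𝓝 (g (T y))) := by
      have := hEval (g.comp T)
      simpa [ContinuousLinearMap.comp_apply] using this
    have hdiff : Tendsto (fun n : ℕ => g (cesM T n x) - g (T (cesM T n x))) L (𝓝 0) := by
      have h0 : Tendsto (fun n : ℕ => ((n : ℝ) + 1)⁻¹ • (x - (T ^ (n + 1)) x)) atTop (𝓝 0) :=
        tendsto_aux_zero T hpow x
      have h2 := (g.continuous.tendsto 0).comp (h0.mono_left hLle)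
      have e : (fun z => g z) ∘ (fun n : ℕ => ((n : ℝ) + 1)⁻¹ • (x - (T ^ (n + 1)) x))
          = fun n : ℕ => g (cesM T n x) - g (T (cesM T n x)) := by
        funext n
        simp only [Function.comp]
        rw [← sub_T_cesM_apply T n x, map_sub]
      rw [e, map_zero] at h2
      exact h2
    have h2 : Tendsto (fun n => g (T (cesM T n x))) L (𝓝 (g y)) := by
      have := (hEval g).sub hdiff
      have e : (fun n => g (cesM T n x) - (g (cesM T n x) - g (T (cesM T n x))))
          = fun n => g (T (cesM T n x)) := by funext n; ring
      rw [e, sub_zero] at this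
      exact this
    exact (tendsto_nhds_unique h1 h2)
  -- functionals vanishing on range (1 - T) agree on x and y
  have hfix : ∀ f : StrongDual ℝ X, (∀ v : X, f (v - T v) = 0) → f x = f y := by
    intro f hf
    have hconst : ∀ n, f (cesM T n x) = f x := by
      intro n
      obtain ⟨v, hv⟩ := exists_sub_cesM T n x
      have h0 : f (x - cesM T n x) = 0 := by rw [hv]; exact hf v
      rw [map_sub] at h0
      linarith
    have h1 : Tendsto (fun n => f (cesM T n x)) L (𝓝 (f x)) := by
      simp only [hconst]; exact tendsto_const_nhds
    exact tendsto_nhds_unique h1 (hEval f)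
  -- x - y lies in the closure of the range of 1 - T
  set Sr : Set X := Set.range fun v : X => v - T v with hSr
  have hconvSr : Convex ℝ Sr := by
    rintro a ⟨v, rfl⟩ b ⟨w, rfl⟩ s t hs ht hst
    refine ⟨s • v + t • w, ?_⟩
    simp only [map_add, map_smul, smul_sub]
    abel
  have hxy : x - y ∈ closure Sr := by
    by_contra hmem'
    obtain ⟨f, u, hfu, hux⟩ :=
      geometric_hahn_banach_closed_point hconvSr.closure isClosed_closure hmem'
    have hf0 : ∀ v : X, f (v - T v) = 0 := by
      intro v
      by_contra hne
      have hb : ∀ t : ℝ, t * f (v - T v) < u := by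
        intro t
        have hmem2 : t • v - T (t • v) ∈ Sr := ⟨t • v, rfl⟩
        have h3 := hfu _ (subset_closure hmem2)
        have he : f (t • v - T (t • v)) = t * f (v - T v) := by
          simp only [map_sub, map_smul, smul_eq_mul]
          ring
        rwa [he] at h3
      have := hb (u / f (v - T v))
      rw [div_mul_cancel₀ _ hne] at this
      exact lt_irrefl _ this
    have hu0 : (0 : ℝ) < u := by
      have : (0 : X) ∈ Sr := ⟨0, by simp⟩
      have h3 := hfu _ (subset_closure this)
      simpa using h3
    have hxyeq : f (x - y) = 0 := by
      rw [map_sub, hfix f hf0, sub_self]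
    rw [hxyeq] at hux
    linarith
  -- Cesàro means of x - y tend to 0
  have hconv0 : Tendsto (fun n => cesM T n (x - y)) atTop (𝓝 (0 : X)) := by
    rw [NormedAddCommGroup.tendsto_nhds_zero]
    intro ε hε
    obtain ⟨z, hz, hzdist⟩ := Metric.mem_closure_iff.1 hxy (ε / (2 * (C + 1))) (by positivity)
    obtain ⟨v, rfl⟩ := hz
    have h1 : Tendsto (fun n => cesM T n (v - T v)) atTop (𝓝 (0 : X)) := by
      have := tendsto_aux_zero T hpow v
      simpa only [cesM_one_sub_apply] using this.congr fun n => rfl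
    rw [NormedAddCommGroup.tendsto_nhds_zero] at h1
    filter_upwards [h1 (ε / 2) (by positivity)] with n hn
    have hsplit : cesM T n (x - y) = cesM T n (v - T v) + cesM T n ((x - y) - (v - T v)) := by
      rw [← map_add]
      congr 1
      abel
    have hdist : ‖(x - y) - (v - T v)‖ < ε / (2 * (C + 1)) := by
      rw [← dist_eq_norm]; exact hzdist
    have hb : ‖cesM T n ((x - y) - (v - T v))‖ ≤ C * ‖(x - y) - (v - T v)‖ :=
      (cesM T n).le_of_opNorm_le (hC n) _
    have hb2 : C * ‖(x - y) - (v - T v)‖ < ε / 2 := by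
      have h4 : C * ‖(x - y) - (v - T v)‖ ≤ (C + 1) * ‖(x - y) - (v - T v)‖ := by
        have := norm_nonneg ((x - y) - (v - T v)); nlinarith
      have h5 : (C + 1) * ‖(x - y) - (v - T v)‖ < (C + 1) * (ε / (2 * (C + 1))) :=
        mul_lt_mul_of_pos_left hdist (by positivity)
      have h6 : (C + 1) * (ε / (2 * (C + 1))) = ε / 2 := by
        field_simp
      linarith
    calc ‖cesM T n (x - y)‖
        ≤ ‖cesM T n (v - T v)‖ + ‖cesM T n ((x - y) - (v - T v))‖ := by
          rw [hsplit]; exact norm_add_le _ _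
      _ < ε / 2 + ε / 2 := add_lt_add hn (hb.trans_lt hb2)
      _ = ε := by ring
  -- conclude
  refine ⟨y, ?_⟩
  have hMx : ∀ n, cesM T n x = cesM T n (x - y) + y := by
    intro n
    rw [map_sub, cesM_apply_fixed T hTy n]
    abel
  have hfinal : Tendsto (fun n => cesM T n x) atTop (𝓝 y) := by
    simp only [hMx]
    simpa using hconv0.add_const y
  exact hfinal
end

section
/- For each m ≥ 1, the squared D_0-norm of ((1-z)/2)^m equals 2^{-2m} ∑_{k=0}^m binom(m,k)² (k+1), and via the Chu–Vandermonde identity this equals 2^{-2m}(m+2)/2 · binom(2m, m), which is asymptotically comparable to √m. In particular the function z ↦ e^{iθ}((1-z)/2)^k gives, for the Dirichlet space D_0, powers whose norms grow like n^{1/4} and hence M_φ is not power bounded. -/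
open Finset

lemma sum_choose_sq (m : ℕ) :
    ∑ k ∈ range (m + 1), m.choose k ^ 2 = (2 * m).choose m := by
  rw [two_mul, Nat.add_choose_eq, Finset.Nat.sum_antidiagonal_eq_sum_range_succ
      (fun i j => m.choose i * m.choose j)]
  refine Finset.sum_congr rfl fun k hk => ?_
  rw [Nat.choose_symm (Nat.lt_succ_iff.mp (mem_range.mp hk)), sq]

lemma sum_choose_sq_real (m : ℕ) :
    ∑ k ∈ range (m + 1), ((m.choose k : ℝ)) ^ 2 = ((2 * m).choose m : ℝ) := by
  rw [← sum_choose_sq]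
  push_cast
  rfl

lemma sum_k_choose_sq (m : ℕ) :
    ∑ k ∈ range (m + 1), (m.choose k : ℝ) ^ 2 * k
      = (m : ℝ) / 2 * ((2 * m).choose m : ℝ) := by
  have hrefl := Finset.sum_range_reflect (fun k => (m.choose k : ℝ) ^ 2 * k) (m + 1)
  simp only [Nat.add_sub_cancel] at hrefl
  have h2 : ∑ k ∈ range (m + 1), (m.choose k : ℝ) ^ 2 * ((m : ℝ) - k)
      = ∑ k ∈ range (m + 1), (m.choose k : ℝ) ^ 2 * k := by
    rw [← hrefl]
    refine Finset.sum_congr rfl fun j hj => ?_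
    have hjm : j ≤ m := Nat.lt_succ_iff.mp (mem_range.mp hj)
    rw [Nat.choose_symm hjm, Nat.cast_sub hjm]
  have h3 : (2 : ℝ) * ∑ k ∈ range (m + 1), (m.choose k : ℝ) ^ 2 * k
      = (m : ℝ) * ((2 * m).choose m : ℝ) := by
    have := sum_choose_sq_real m
    calc (2 : ℝ) * ∑ k ∈ range (m + 1), (m.choose k : ℝ) ^ 2 * k
        = (∑ k ∈ range (m + 1), (m.choose k : ℝ) ^ 2 * ((m : ℝ) - k))
          + ∑ k ∈ range (m + 1), (m.choose k : ℝ) ^ 2 * k := by rw [h2]; ring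
      _ = ∑ k ∈ range (m + 1), (m : ℝ) * (m.choose k : ℝ) ^ 2 := by
          rw [← Finset.sum_add_distrib]; exact Finset.sum_congr rfl fun k _ => by ring
      _ = (m : ℝ) * ((2 * m).choose m : ℝ) := by rw [← Finset.mul_sum, this]
  linarith

lemma main_identity (m : ℕ) :
    (∑ k ∈ range (m + 1), ((m.choose k : ℝ)) ^ 2 * ((k : ℝ) + 1)) =
      ((m : ℝ) + 2) / 2 * (((2 * m).choose m : ℝ)) := by
  have h : ∑ k ∈ range (m + 1), ((m.choose k : ℝ)) ^ 2 * ((k : ℝ) + 1)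
      = (∑ k ∈ range (m + 1), (m.choose k : ℝ) ^ 2 * k)
        + ∑ k ∈ range (m + 1), (m.choose k : ℝ) ^ 2 := by
    rw [← Finset.sum_add_distrib]; exact Finset.sum_congr rfl fun k _ => by ring
  rw [h, sum_k_choose_sq, sum_choose_sq_real]; ring

-- bounds on central binomial coefficient
lemma cb_upper (m : ℕ) :
    ((2 * m + 1 : ℕ) : ℝ) * (((2 * m).choose m : ℝ)) ^ 2 ≤ 16 ^ m := by
  induction m with
  | zero => norm_num
  | succ n ih =>
    have hrec := Nat.succ_mul_centralBinom_succ n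
    rw [Nat.centralBinom, Nat.centralBinom] at hrec
    set c : ℝ := ((2 * n).choose n : ℝ) with hc
    set c' : ℝ := ((2 * (n+1)).choose (n+1) : ℝ) with hc'
    have hrecR : ((n : ℝ) + 1) * c' = 2 * (2 * n + 1) * c := by
      have := congrArg (Nat.cast : ℕ → ℝ) hrec
      push_cast at this
      rw [hc, hc']; linarith [this]
    have hsq : ((n : ℝ) + 1) ^ 2 * c' ^ 2 = 4 * (2 * n + 1) ^ 2 * c ^ 2 := by
      have := congrArg (fun x : ℝ => x ^ 2) hrecR
      simp only [mul_pow] at this; nlinarith [this]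
    push_cast
    push_cast at ih
    have h16 : (0:ℝ) ≤ 16 ^ n := by positivity
    have hmul := mul_le_mul_of_nonneg_left ih
      (show (0:ℝ) ≤ 4 * (2 * (n:ℝ) + 3) * (2 * n + 1) by positivity)
    have h2 := mul_le_mul_of_nonneg_right
      (show 4 * (2 * (n:ℝ) + 3) * (2 * n + 1) ≤ 16 * ((n:ℝ) + 1) ^ 2 by nlinarith) h16
    have key : ((n:ℝ)+1)^2 * ((2 * ((n:ℝ)+1) + 1) * c' ^ 2) ≤ ((n:ℝ)+1)^2 * 16 ^ (n+1) := by
      calc ((n:ℝ)+1)^2 * ((2 * ((n:ℝ)+1) + 1) * c' ^ 2)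
          = (2*(n:ℝ)+3) * (((n:ℝ)+1)^2 * c'^2) := by ring
        _ = (2*(n:ℝ)+3) * (4*(2*(n:ℝ)+1)^2*c^2) := by rw [hsq]
        _ = 4*(2*(n:ℝ)+3)*(2*(n:ℝ)+1) * ((2*(n:ℝ)+1)*c^2) := by ring
        _ ≤ 4*(2*(n:ℝ)+3)*(2*(n:ℝ)+1) * 16^n := hmul
        _ ≤ 16*((n:ℝ)+1)^2 * 16^n := h2
        _ = ((n:ℝ)+1)^2 * 16^(n+1) := by rw [pow_succ]; ring
    exact le_of_mul_le_mul_left key (by positivity)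

lemma cb_lower (m : ℕ) (hm : 1 ≤ m) :
    (16 : ℝ) ^ m ≤ 4 * m * (((2 * m).choose m : ℝ)) ^ 2 := by
  induction m with
  | zero => omega
  | succ n ih =>
    rcases Nat.eq_or_lt_of_le hm with h1 | h1
    · simp [← h1]; norm_num
    · have hn : 1 ≤ n := by omega
      have ih' := ih hn
      have hrec := Nat.succ_mul_centralBinom_succ n
      rw [Nat.centralBinom, Nat.centralBinom] at hrec
      set c : ℝ := ((2 * n).choose n : ℝ) with hc
      set c' : ℝ := ((2 * (n+1)).choose (n+1) : ℝ) with hc'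
      have hrecR : ((n : ℝ) + 1) * c' = 2 * (2 * n + 1) * c := by
        have := congrArg (Nat.cast : ℕ → ℝ) hrec
        push_cast at this
        rw [hc, hc']; linarith [this]
      have hsq : ((n : ℝ) + 1) ^ 2 * c' ^ 2 = 4 * (2 * n + 1) ^ 2 * c ^ 2 := by
        have := congrArg (fun x : ℝ => x ^ 2) hrecR
        simp only [mul_pow] at this; nlinarith [this]
      have hnpos : (0 : ℝ) < n := by exact_mod_cast hn
      have h16 : (0:ℝ) ≤ 16 ^ n := by positivity
      have hmul := mul_le_mul_of_nonneg_left ih'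
        (show (0:ℝ) ≤ 4 * (2 * (n:ℝ) + 1) ^ 2 by positivity)
      have h2 := mul_le_mul_of_nonneg_right
        (show 16 * (n:ℝ) * ((n:ℝ)+1) ≤ 4 * (2 * (n:ℝ) + 1) ^ 2 by nlinarith) h16
      push_cast
      have key : ((n:ℝ) * ((n:ℝ)+1)) * 16 ^ (n+1)
          ≤ ((n:ℝ) * ((n:ℝ)+1)) * (4 * ((n:ℝ)+1) * c' ^ 2) := by
        calc ((n:ℝ) * ((n:ℝ)+1)) * 16 ^ (n+1)
            = (16 * (n:ℝ) * ((n:ℝ)+1)) * 16^n := by rw [pow_succ]; ring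
          _ ≤ (4 * (2*(n:ℝ)+1)^2) * 16^n := h2
          _ ≤ 4 * (2*(n:ℝ)+1)^2 * (4 * (n:ℝ) * c^2) := hmul
          _ = 4*(n:ℝ) * (4*(2*(n:ℝ)+1)^2*c^2) := by ring
          _ = 4*(n:ℝ) * (((n:ℝ)+1)^2*c'^2) := by rw [hsq]
          _ = ((n:ℝ)*((n:ℝ)+1)) * (4*((n:ℝ)+1)*c'^2) := by ring
      exact le_of_mul_le_mul_left key (by positivity)

/-- For each `m ≥ 1`, the squared Dirichlet norm of `((1-z)/2)^m` is
`2^{-2m} ∑_{k=0}^m binom(m,k)² (k+1)`, which by the Chu–Vandermonde identity equals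
`2^{-2m} ((m+2)/2) binom(2m,m)` and is comparable to `√m`. (In particular, the
powers of `φ(z) = e^{iθ}((1-z)/2)^k` have Dirichlet norms growing like `n^{1/4}`,
so `M_φ` is not power bounded on `D_0`.) -/
theorem dirichlet_norm_one_sub_z_div_two_pow :
    (∀ m : ℕ, 1 ≤ m →
      (∑ k ∈ range (m + 1), ((m.choose k : ℝ)) ^ 2 * ((k : ℝ) + 1)) =
        ((m : ℝ) + 2) / 2 * (((2 * m).choose m : ℝ))) ∧
    ∃ c : ℝ, 0 < c ∧ ∃ C : ℝ, 0 < C ∧ ∀ m : ℕ, 1 ≤ m →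
      c * Real.sqrt m ≤
          (∑ k ∈ range (m + 1), ((m.choose k : ℝ)) ^ 2 * ((k : ℝ) + 1)) / 4 ^ m ∧
        (∑ k ∈ range (m + 1), ((m.choose k : ℝ)) ^ 2 * ((k : ℝ) + 1)) / 4 ^ m ≤
          C * Real.sqrt m := by
  refine ⟨fun m _ => main_identity m, 1/4, by norm_num, 3/2, by norm_num, fun m hm => ?_⟩
  set B : ℝ := ((2 * m).choose m : ℝ) with hB
  have hBpos : (0 : ℝ) < B := by
    rw [hB]; exact_mod_cast Nat.pos_of_ne_zero (by
      have := Nat.centralBinom_pos m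
      rw [Nat.centralBinom] at this; omega)
  have hm1 : (1 : ℝ) ≤ m := by exact_mod_cast hm
  set s : ℝ := Real.sqrt m with hsdef
  have hs : s ^ 2 = m := Real.sq_sqrt (by positivity)
  have hs0 : 0 < s := Real.sqrt_pos.mpr (by linarith)
  have h4pos : (0 : ℝ) < 4 ^ m := by positivity
  have hlow := cb_lower m hm
  have hup := cb_upper m
  push_cast at hup
  have h16 : (16 : ℝ) ^ m = (4 ^ m) ^ 2 := by
    rw [← pow_mul, mul_comm, pow_mul]; norm_num
  rw [h16] at hlow hup
  rw [← hB] at hlow hup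
  have hlow' : ((4:ℝ) ^ m) ^ 2 ≤ (2 * s * B) ^ 2 := by
    have h' : (2 * s * B) ^ 2 = 4 * (s ^ 2) * B ^ 2 := by ring
    rw [h', hs]; exact hlow
  have hup' : (s * B) ^ 2 ≤ ((4:ℝ) ^ m) ^ 2 := by
    have h' : (s * B) ^ 2 = (s ^ 2) * B ^ 2 := by ring
    rw [h', hs]; nlinarith [hup, sq_nonneg B]
  have hL : (4 : ℝ) ^ m ≤ 2 * s * B := by
    nlinarith [hlow', mul_pos (mul_pos (by norm_num : (0:ℝ)<2) hs0) hBpos, h4pos]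
  have hU : s * B ≤ 4 ^ m := by
    nlinarith [hup', mul_pos hs0 hBpos, h4pos]
  rw [main_identity m]
  constructor
  · rw [le_div_iff₀ h4pos]
    nlinarith [mul_le_mul_of_nonneg_left hL hs0.le, hs, hBpos, hm1]
  · rw [div_le_iff₀ h4pos]
    nlinarith [mul_le_mul_of_nonneg_left hU (by positivity : (0:ℝ) ≤ (3/2) * s), hs, hBpos, hm1, hs0]
end
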